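/- For n ≥ 3 and a fixed permutation-symmetric state ψ, the set of invertible d×d matrices B such that (B ⊗ B^{-1} ⊗ I^{⊗(n-2)}) ψ = ψ forms a group under matrix multiplication. -/
import Mathlib

open Matrix BigOperators Polynomial

/-- Permutation symmetry of an `n`-qudit state represented by its amplitudes. -/
def PSym {n d : ℕ} (ψ : (Fin n → Fin d) → ℂ) : Prop :=
  ∀ σ : Equiv.Perm (Fin n), ∀ x : Fin n → Fin d, ψ (x ∘ σ) = ψ x

/-- The operator `B` acting on the `k`-th tensor factor (identity elsewhere). -/
noncomputable def appAt {n d : ℕ} (k : Fin n) (B : Matrix (Fin d) (Fin d) ℂ)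
    (ψ : (Fin n → Fin d) → ℂ) : (Fin n → Fin d) → ℂ :=
  fun x => ∑ j : Fin d, B (x k) j * ψ (Function.update x k j)

/-- The operator `A 1 ⊗ A 2 ⊗ ⋯ ⊗ A n` acting on an `n`-qudit state. -/
noncomputable def appAll {n d : ℕ} (A : Fin n → Matrix (Fin d) (Fin d) ℂ)
    (ψ : (Fin n → Fin d) → ℂ) : (Fin n → Fin d) → ℂ :=
  fun x => ∑ y : Fin n → Fin d, (∏ k, A k (x k) (y k)) * ψ y

lemma appAt_one {n d : ℕ} (k : Fin n) (φ : (Fin n → Fin d) → ℂ) :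
    appAt k 1 φ = φ := by
  funext x
  simp only [appAt, Matrix.one_apply]
  rw [Finset.sum_eq_single (x k)]
  · simp
  · intro j _ hj
    simp [Ne.symm hj]
  · simp

lemma appAt_mul {n d : ℕ} (k : Fin n) (A B : Matrix (Fin d) (Fin d) ℂ)
    (φ : (Fin n → Fin d) → ℂ) :
    appAt k (A * B) φ = appAt k A (appAt k B φ) := by
  funext x
  simp only [appAt, Matrix.mul_apply, Function.update_self, Function.update_idem,
    Finset.sum_mul, Finset.mul_sum, mul_assoc]
  exact Finset.sum_comm

lemma appAt_comm {n d : ℕ} {k l : Fin n} (h : k ≠ l) (A B : Matrix (Fin d) (Fin d) ℂ)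
    (φ : (Fin n → Fin d) → ℂ) :
    appAt k A (appAt l B φ) = appAt l B (appAt k A φ) := by
  funext x
  simp only [appAt, Function.update_of_ne h, Function.update_of_ne h.symm, Finset.mul_sum]
  rw [Finset.sum_comm]
  refine Finset.sum_congr rfl fun m _ => Finset.sum_congr rfl fun j _ => ?_
  rw [Function.update_comm h]
  ring

lemma appAt_perm {n d : ℕ} (k : Fin n) (A : Matrix (Fin d) (Fin d) ℂ)
    (φ : (Fin n → Fin d) → ℂ) (σ : Equiv.Perm (Fin n)) :
    appAt k A (fun x => φ (x ∘ σ)) = fun x => appAt (σ⁻¹ k) A φ (x ∘ σ) := by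
  funext x
  simp only [appAt]
  refine Finset.sum_congr rfl fun j _ => ?_
  have h1 : (Function.update x k j) ∘ σ = Function.update (x ∘ σ) (σ.symm k) j :=
    Function.update_comp_equiv x σ k j
  have h2 : (x ∘ σ) (σ⁻¹ k) = x k := by simp
  rw [h1, h2]
  rfl

lemma appAt_cancel {n d : ℕ} (k : Fin n) (B : (Matrix (Fin d) (Fin d) ℂ)ˣ)
    (φ : (Fin n → Fin d) → ℂ) :
    appAt k (↑B⁻¹) (appAt k (↑B) φ) = φ := by
  rw [← appAt_mul, ← Units.val_mul, inv_mul_cancel, Units.val_one, appAt_one]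

lemma appAt_transfer {n d : ℕ} {ψ : (Fin n → Fin d) → ℂ} (hψ : PSym ψ)
    {a b : Fin n} (A B : Matrix (Fin d) (Fin d) ℂ) (σ : Equiv.Perm (Fin n))
    (h : appAt a A (appAt b B ψ) = ψ) :
    appAt (σ⁻¹ a) A (appAt (σ⁻¹ b) B ψ) = ψ := by
  have hψσ : (fun x => ψ (x ∘ σ)) = ψ := funext fun x => hψ σ x
  have h2 : appAt b B ψ = fun x => appAt (σ⁻¹ b) B ψ (x ∘ σ) := by
    conv_lhs => rw [← hψσ]
    exact appAt_perm b B ψ σ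
  have h3 : appAt a A (appAt b B ψ) = fun x => appAt (σ⁻¹ a) A (appAt (σ⁻¹ b) B ψ) (x ∘ σ) := by
    rw [h2]; exact appAt_perm a A _ σ
  rw [h3] at h
  funext x
  have hx : (x ∘ ⇑σ⁻¹) ∘ ⇑σ = x := by
    funext i; simp
  have := congrFun h (x ∘ ⇑σ⁻¹)
  rw [hx] at this
  rw [this, hψ σ⁻¹ x]

theorem stmt_12 {n d : ℕ} (hn : 3 ≤ n) (ψ : (Fin n → Fin d) → ℂ) (hψ : PSym ψ) :
    ∃ H : Subgroup (Matrix (Fin d) (Fin d) ℂ)ˣ,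
      ∀ B : (Matrix (Fin d) (Fin d) ℂ)ˣ,
        B ∈ H ↔
          appAt ⟨0, by omega⟩ (B : Matrix (Fin d) (Fin d) ℂ)
              (appAt ⟨1, by omega⟩ ((B⁻¹ : (Matrix (Fin d) (Fin d) ℂ)ˣ) :
                Matrix (Fin d) (Fin d) ℂ) ψ) = ψ := by
  set i0 : Fin n := ⟨0, by omega⟩ with hi0
  set i1 : Fin n := ⟨1, by omega⟩ with hi1
  set i2 : Fin n := ⟨2, by omega⟩ with hi2
  have h01 : i0 ≠ i1 := by simp [hi0, hi1, Fin.ext_iff]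
  have h02 : i0 ≠ i2 := by simp [hi0, hi2, Fin.ext_iff]
  have h12 : i1 ≠ i2 := by simp [hi1, hi2, Fin.ext_iff]
  let S : Set (Matrix (Fin d) (Fin d) ℂ)ˣ := setOf (fun B =>
    appAt i0 (B : Matrix (Fin d) (Fin d) ℂ)
      (appAt i1 ((B⁻¹ : (Matrix (Fin d) (Fin d) ℂ)ˣ) : Matrix (Fin d) (Fin d) ℂ) ψ) = ψ)
  have memS : ∀ B : (Matrix (Fin d) (Fin d) ℂ)ˣ, B ∈ S ↔
      appAt i0 (B : Matrix (Fin d) (Fin d) ℂ)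
        (appAt i1 ((B⁻¹ : (Matrix (Fin d) (Fin d) ℂ)ˣ) : Matrix (Fin d) (Fin d) ℂ) ψ) = ψ :=
    fun B => Iff.rfl
  refine ⟨{ carrier := S, one_mem' := ?_, mul_mem' := ?_, inv_mem' := ?_ },
    fun B => Iff.rfl⟩
  · -- closure
    intro B C hB hC
    rw [memS] at hB hC
    refine (memS _).mpr ?_
    -- transfer hB to positions (0,2)
    have hB02 : appAt i0 (↑B) (appAt i2 (↑B⁻¹) ψ) = ψ := by
      have := appAt_transfer hψ (↑B) (↑B⁻¹) (Equiv.swap i1 i2) hB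
      rwa [Equiv.swap_inv, Equiv.swap_apply_of_ne_of_ne h01 h02,
        Equiv.swap_apply_left] at this
    -- hence appAt i1 B⁻¹ ψ = appAt i2 B⁻¹ ψ
    have key : appAt i1 (↑B⁻¹) ψ = appAt i2 (↑B⁻¹) ψ := by
      have e1 : appAt i0 (↑B⁻¹) (appAt i0 (↑B) (appAt i1 (↑B⁻¹) ψ)) = appAt i0 (↑B⁻¹) ψ := by
        rw [hB]
      have e2 : appAt i0 (↑B⁻¹) (appAt i0 (↑B) (appAt i2 (↑B⁻¹) ψ)) = appAt i0 (↑B⁻¹) ψ := by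
        rw [hB02]
      rw [appAt_cancel] at e1 e2
      rw [e1, e2]
    rw [_root_.mul_inv_rev, Units.val_mul, Units.val_mul, appAt_mul, appAt_mul, key,
      appAt_comm h12, appAt_comm h02, hC, hB02]
  · exact (memS 1).mpr (by simp [appAt_one])
  · intro B hB
    rw [memS] at hB
    refine (memS _).mpr ?_
    rw [inv_inv]
    calc appAt i0 (↑B⁻¹) (appAt i1 (↑B) ψ)
        = appAt i0 (↑B⁻¹) (appAt i1 (↑B) (appAt i0 (↑B) (appAt i1 (↑B⁻¹) ψ))) := by
          conv_lhs => rw [← hB]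
      _ = appAt i0 (↑B⁻¹) (appAt i0 (↑B) (appAt i1 (↑B) (appAt i1 (↑B⁻¹) ψ))) := by
          rw [appAt_comm h01.symm]
      _ = appAt i1 (↑B) (appAt i1 (↑B⁻¹) ψ) := appAt_cancel i0 B _
      _ = ψ := by
          rw [← appAt_mul, ← Units.val_mul, mul_inv_cancel, Units.val_one, appAt_one]
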